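/- FM product formula about a matrix centre: Let (A,B,C,D) on H and (A',B',C',D') on H' be Fornasini–Marchesini realizations at Y ∈ (ℂ^{n×n})^d, with FM transfer functions f and g. Define on H ⊕ H' the FM realization (A^×,B^×,C^×,D^×) by A^×_j(G)(x ⊕ x') := (A_j(G)x + B_j(G)C'x') ⊕ A'_j(G)x', B^×_j(G)v := B_j(G)D'v ⊕ B'_j(G)v, C^×(x ⊕ x') := Cx + DC'x', and D^× := DD'. Then for every m ≥ 1 and every X ∈ (ℂ^{mn×mn})^d such that both L_A(X − I_m⊗Y) and L_{A'}(X − I_m⊗Y) are invertible, L_{A^×}(X − I_m⊗Y) is invertible and the FM transfer function of (A^×,B^×,C^×,D^×) at X equals the matrix product f(X)·g(X). -/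

import Mathlib

set_option synthInstance.maxHeartbeats 1000000
set_option maxHeartbeats 1000000

noncomputable section
namespace MC

/-- Projection onto the `p`-th summand of the Hilbert direct sum of copies of `E`. -/
def projL (ι : Type*) [Fintype ι] (E : Type*) [NormedAddCommGroup E] [InnerProductSpace ℂ E]
    (p : ι) : PiLp 2 (fun _ : ι => E) →L[ℂ] E :=
  PiLp.proj 2 (fun _ : ι => E) p

/-- Inclusion of the `p`-th summand into the Hilbert direct sum of copies of `E`. -/
def inclL (ι : Type*) [Fintype ι] [DecidableEq ι] (E : Type*) [NormedAddCommGroup E]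
    [InnerProductSpace ℂ E] (p : ι) : E →L[ℂ] PiLp 2 (fun _ : ι => E) :=
  (PiLp.continuousLinearEquiv 2 ℂ (fun _ : ι => E)).symm.toContinuousLinearMap.comp
    (ContinuousLinearMap.pi (fun q => if q = p then ContinuousLinearMap.id ℂ E else 0))

variable {E : Type*} [NormedAddCommGroup E] [InnerProductSpace ℂ E]

instance piLpCompleteSpace {ι : Type*} [Fintype ι] [CompleteSpace E] :
    CompleteSpace (PiLp 2 (fun _ : ι => E)) :=
  inferInstance

/-- The `(p,q)` block (an `ν × ν` matrix) of a block matrix indexed by `μ × ν`. -/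
def blk {μ ν : Type*} (Z : Matrix (μ × ν) (μ × ν) ℂ) (p q : μ) : Matrix ν ν ℂ :=
  Matrix.of fun i j => Z (p, i) (q, j)

/-- The ampliation `(id_μ ⊗ A)(Z)` of a map `A : ℂ^{ν×ν} → B(E)` applied to a block
matrix `Z`, acting on the Hilbert direct sum `ℂ^μ ⊗ E`. -/
def amp {μ ν : Type*} [Fintype μ] [DecidableEq μ]
    (A : Matrix ν ν ℂ → (E →L[ℂ] E)) (Z : Matrix (μ × ν) (μ × ν) ℂ) :
    PiLp 2 (fun _ : μ => E) →L[ℂ] PiLp 2 (fun _ : μ => E) :=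
  ∑ p, ∑ q, (inclL μ E p).comp ((A (blk Z p q)).comp (projL μ E q))

/-- The linear pencil `L_A(X) = I - Σ_j (id_μ ⊗ A_j)(X_j)`. -/
def pencil {d : ℕ} {μ ν : Type*} [Fintype μ] [DecidableEq μ]
    (A : Fin d → Matrix ν ν ℂ → (E →L[ℂ] E)) (X : Fin d → Matrix (μ × ν) (μ × ν) ℂ) :
    PiLp 2 (fun _ : μ => E) →L[ℂ] PiLp 2 (fun _ : μ => E) :=
  1 - ∑ j, amp (A j) (X j)

/-- `I_μ ⊗ Y` as a block matrix. -/
def oneKron (μ : Type*) [DecidableEq μ] {ν : Type*} (Y : Matrix ν ν ℂ) :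
    Matrix (μ × ν) (μ × ν) ℂ :=
  Matrix.of fun p q => if p.1 = q.1 then Y p.2 q.2 else 0

/-- Restriction `ℂ^{μ×ν} → ℂ^ν` onto the `p`-th slot. -/
def restrL (μ ν : Type*) [Fintype μ] [Fintype ν] [DecidableEq ν] (p : μ) :
    EuclideanSpace ℂ (μ × ν) →L[ℂ] EuclideanSpace ℂ ν :=
  ∑ i : ν, (EuclideanSpace.proj ((p, i) : μ × ν)).smulRight (EuclideanSpace.single i (1 : ℂ))

/-- The ampliation `I_μ ⊗ b : ℂ^{μ×ν} → ℂ^μ ⊗ E` of `b : ℂ^ν → E`. -/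
def ampVec {μ ν : Type*} [Fintype μ] [DecidableEq μ] [Fintype ν] [DecidableEq ν]
    (b : EuclideanSpace ℂ ν →L[ℂ] E) :
    EuclideanSpace ℂ (μ × ν) →L[ℂ] PiLp 2 (fun _ : μ => E) :=
  ∑ p : μ, (inclL μ E p).comp (b.comp (restrL μ ν p))

/-- The quantized transfer function
`f(X) = (I_μ⊗b)^* L_A(X - I_μ⊗Y)^{-1} (I_μ⊗c)` of a matrix-centre realization,
as an operator on `ℂ^{μ×ν}`. -/
def transfer {d : ℕ} {μ ν : Type*} [Fintype μ] [DecidableEq μ] [Fintype ν] [DecidableEq ν]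
    [CompleteSpace E]
    (A : Fin d → Matrix ν ν ℂ → (E →L[ℂ] E))
    (b c : EuclideanSpace ℂ ν →L[ℂ] E) (Y : Fin d → Matrix ν ν ℂ)
    (X : Fin d → Matrix (μ × ν) (μ × ν) ℂ) :
    EuclideanSpace ℂ (μ × ν) →L[ℂ] EuclideanSpace ℂ (μ × ν) :=
  (ContinuousLinearMap.adjoint (ampVec (μ := μ) b)).comp
    ((Ring.inverse (pencil A (fun j => X j - oneKron μ (Y j)))).comp (ampVec c))

/-- The column norm of a `d`-tuple of matrices: the operator norm of the column
`(X_1; …; X_d)`. -/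
def colNorm {d : ℕ} {ι : Type*} [Fintype ι] [DecidableEq ι] (X : Fin d → Matrix ι ι ℂ) : ℝ :=
  ‖LinearMap.toContinuousLinearMap
      (Matrix.toEuclideanLin
        (Matrix.of fun (pq : Fin d × ι) (r : ι) => X pq.1 pq.2 r))‖

/-- The word operator `A^ω(G_1,…,G_ℓ) = A_{i_1}(G_1) ⋯ A_{i_ℓ}(G_ℓ)`, encoded by the
list `[(i_1,G_1),…,(i_ℓ,G_ℓ)]`; the empty word gives the identity. -/
def wordOp {d : ℕ} {ν : Type*}
    (A : Fin d → Matrix ν ν ℂ → (E →L[ℂ] E)) :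
    List (Fin d × Matrix ν ν ℂ) → (E →L[ℂ] E)
  | [] => 1
  | g :: t => (A g.1 g.2) * wordOp A t

/-- The adjoint word operator `A^{ω;†}(G_1,…,G_ℓ) = A_{i_ℓ}(G_ℓ^*)^* ⋯ A_{i_1}(G_1^*)^*`. -/
def wordOpDag {d : ℕ} {ν : Type*} [CompleteSpace E]
    (A : Fin d → Matrix ν ν ℂ → (E →L[ℂ] E))
    (l : List (Fin d × Matrix ν ν ℂ)) : E →L[ℂ] E :=
  ContinuousLinearMap.adjoint (wordOp A (l.map fun g => (g.1, g.2.conjTranspose)))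

/-- The controllable subspace `C_{A,c}`. -/
def ctrlSpace {d : ℕ} {ν : Type*} [Fintype ν]
    (A : Fin d → Matrix ν ν ℂ → (E →L[ℂ] E))
    (c : EuclideanSpace ℂ ν →L[ℂ] E) : Submodule ℂ E :=
  (Submodule.span ℂ {x : E | ∃ l v, x = wordOp A l (c v)}).topologicalClosure

/-- The observable subspace `O_{A†,b}`. -/
def obsSpace {d : ℕ} {ν : Type*} [Fintype ν] [CompleteSpace E]
    (A : Fin d → Matrix ν ν ℂ → (E →L[ℂ] E))
    (b : EuclideanSpace ℂ ν →L[ℂ] E) : Submodule ℂ E :=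
  (Submodule.span ℂ {x : E | ∃ l u, x = wordOpDag A l (b u)}).topologicalClosure

/-- Minimality: controllable and observable. -/
def Minimal {d : ℕ} {ν : Type*} [Fintype ν] [CompleteSpace E]
    (A : Fin d → Matrix ν ν ℂ → (E →L[ℂ] E))
    (b c : EuclideanSpace ℂ ν →L[ℂ] E) : Prop :=
  ctrlSpace A c = ⊤ ∧ obsSpace A b = ⊤

/-- Two matrix-centre realizations at the same centre `Y` are analytically equivalent at `Y`
if on some uniform column-ball about `Y` both pencils are invertible and the quantized
transfer functions agree. -/
def AnalyticEquiv {d n : ℕ} {E F : Type*}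
    [NormedAddCommGroup E] [InnerProductSpace ℂ E] [CompleteSpace E]
    [NormedAddCommGroup F] [InnerProductSpace ℂ F] [CompleteSpace F]
    (A : Fin d → Matrix (Fin n) (Fin n) ℂ → (E →L[ℂ] E))
    (b c : EuclideanSpace ℂ (Fin n) →L[ℂ] E)
    (A' : Fin d → Matrix (Fin n) (Fin n) ℂ → (F →L[ℂ] F))
    (b' c' : EuclideanSpace ℂ (Fin n) →L[ℂ] F)
    (Y : Fin d → Matrix (Fin n) (Fin n) ℂ) : Prop :=
  ∃ r > 0, ∀ m : ℕ, 0 < m → ∀ X : Fin d → Matrix (Fin m × Fin n) (Fin m × Fin n) ℂ,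
    colNorm (fun j => X j - oneKron (Fin m) (Y j)) < r →
      IsUnit (pencil A fun j => X j - oneKron (Fin m) (Y j)) ∧
      IsUnit (pencil A' fun j => X j - oneKron (Fin m) (Y j)) ∧
      transfer A b c Y X = transfer A' b' c' Y X

/-- Ampliation `(id_μ ⊗ B_j)(Z) : ℂ^{μ×ν} → ℂ^μ ⊗ E` of `B_j : ℂ^{ν×ν} → B(ℂ^ν, E)`. -/
def ampB {μ ν : Type*} [Fintype μ] [DecidableEq μ] [Fintype ν] [DecidableEq ν]
    (Bj : Matrix ν ν ℂ → (EuclideanSpace ℂ ν →L[ℂ] E)) (Z : Matrix (μ × ν) (μ × ν) ℂ) :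
    EuclideanSpace ℂ (μ × ν) →L[ℂ] PiLp 2 (fun _ : μ => E) :=
  ∑ p, ∑ q, (inclL μ E p).comp ((Bj (blk Z p q)).comp (restrL μ ν q))

/-- Embedding `ℂ^ν → ℂ^{μ×ν}` into the `p`-th slot. -/
def embedE (μ ν : Type*) [Fintype μ] [DecidableEq μ] [Fintype ν] [DecidableEq ν] (p : μ) :
    EuclideanSpace ℂ ν →L[ℂ] EuclideanSpace ℂ (μ × ν) :=
  ∑ i : ν, (EuclideanSpace.proj i).smulRight (EuclideanSpace.single ((p, i) : μ × ν) (1 : ℂ))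

/-- Ampliation `I_μ ⊗ C : ℂ^μ ⊗ E → ℂ^{μ×ν}` of `C : E → ℂ^ν`. -/
def ampRow {μ ν : Type*} [Fintype μ] [DecidableEq μ] [Fintype ν] [DecidableEq ν]
    (Cm : E →L[ℂ] EuclideanSpace ℂ ν) :
    PiLp 2 (fun _ : μ => E) →L[ℂ] EuclideanSpace ℂ (μ × ν) :=
  ∑ p, (embedE μ ν p).comp (Cm.comp (projL μ E p))

/-- The Fornasini–Marchesini quantized transfer function
`f(X) = I_μ⊗D + (I_μ⊗C) L_A(X-I_μ⊗Y)^{-1} Σ_j (id_μ⊗B_j)(X_j-I_μ⊗Y_j)`. -/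
def fmTransfer {d n : ℕ} {μ : Type*} [Fintype μ] [DecidableEq μ] [CompleteSpace E]
    (A : Fin d → Matrix (Fin n) (Fin n) ℂ → (E →L[ℂ] E))
    (B : Fin d → Matrix (Fin n) (Fin n) ℂ → (EuclideanSpace ℂ (Fin n) →L[ℂ] E))
    (Cm : E →L[ℂ] EuclideanSpace ℂ (Fin n)) (D : Matrix (Fin n) (Fin n) ℂ)
    (Y : Fin d → Matrix (Fin n) (Fin n) ℂ)
    (X : Fin d → Matrix (μ × Fin n) (μ × Fin n) ℂ) :
    EuclideanSpace ℂ (μ × Fin n) →L[ℂ] EuclideanSpace ℂ (μ × Fin n) :=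
  Matrix.toEuclideanCLM (𝕜 := ℂ) (oneKron μ D) +
    (ampRow Cm).comp ((Ring.inverse (pencil A (fun j => X j - oneKron μ (Y j)))).comp
      (∑ j, ampB (B j) (X j - oneKron μ (Y j))))

section Prod

variable (F : Type*) [NormedAddCommGroup F] [InnerProductSpace ℂ F]

variable (E) in
/-- `WithLp 2 (E × F) → E × F` as a continuous linear map. -/
def prodDown : WithLp 2 (E × F) →L[ℂ] E × F :=
  (WithLp.prodContinuousLinearEquiv 2 ℂ E F : WithLp 2 (E × F) →L[ℂ] E × F)

variable (E) in
/-- `E × F → WithLp 2 (E × F)` as a continuous linear map. -/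
def prodUp : E × F →L[ℂ] WithLp 2 (E × F) :=
  ((WithLp.prodContinuousLinearEquiv 2 ℂ E F).symm : E × F →L[ℂ] WithLp 2 (E × F))

variable (E) in
/-- First coordinate projection on the Hilbert space direct sum `E ⊕ F`. -/
def fstW : WithLp 2 (E × F) →L[ℂ] E :=
  (ContinuousLinearMap.fst ℂ E F).comp (prodDown E F)

variable (E) in
/-- Second coordinate projection on the Hilbert space direct sum `E ⊕ F`. -/
def sndW : WithLp 2 (E × F) →L[ℂ] F :=
  (ContinuousLinearMap.snd ℂ E F).comp (prodDown E F)

variable (E) in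
/-- First coordinate inclusion into the Hilbert space direct sum `E ⊕ F`. -/
def inlW : E →L[ℂ] WithLp 2 (E × F) :=
  (prodUp E F).comp (ContinuousLinearMap.inl ℂ E F)

variable (E) in
/-- Second coordinate inclusion into the Hilbert space direct sum `E ⊕ F`. -/
def inrW : F →L[ℂ] WithLp 2 (E × F) :=
  (prodUp E F).comp (ContinuousLinearMap.inr ℂ E F)

end Prod

variable {H H' : Type*} [NormedAddCommGroup H] [InnerProductSpace ℂ H] [CompleteSpace H]
  [NormedAddCommGroup H'] [InnerProductSpace ℂ H'] [CompleteSpace H']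

/-- The `A`-maps of the FM product realization:
`A^×_j(G)(x ⊕ x') = (A_j(G)x + B_j(G)C'x') ⊕ A'_j(G)x'`. -/
def fmProdA {d n : ℕ} (A : Fin d → Matrix (Fin n) (Fin n) ℂ → (H →L[ℂ] H))
    (B : Fin d → Matrix (Fin n) (Fin n) ℂ → (EuclideanSpace ℂ (Fin n) →L[ℂ] H))
    (A' : Fin d → Matrix (Fin n) (Fin n) ℂ → (H' →L[ℂ] H'))
    (Cm' : H' →L[ℂ] EuclideanSpace ℂ (Fin n))
    (j : Fin d) (G : Matrix (Fin n) (Fin n) ℂ) :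
    WithLp 2 (H × H') →L[ℂ] WithLp 2 (H × H') :=
  (prodUp H H').comp
    (((A j G).comp (fstW H H') + (B j G).comp (Cm'.comp (sndW H H'))).prod
      ((A' j G).comp (sndW H H')))

/-- The `B`-maps of the FM product realization: `B^×_j(G)v = B_j(G)D'v ⊕ B'_j(G)v`. -/
def fmProdB {d n : ℕ} (B : Fin d → Matrix (Fin n) (Fin n) ℂ → (EuclideanSpace ℂ (Fin n) →L[ℂ] H))
    (B' : Fin d → Matrix (Fin n) (Fin n) ℂ → (EuclideanSpace ℂ (Fin n) →L[ℂ] H'))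
    (D' : Matrix (Fin n) (Fin n) ℂ)
    (j : Fin d) (G : Matrix (Fin n) (Fin n) ℂ) :
    EuclideanSpace ℂ (Fin n) →L[ℂ] WithLp 2 (H × H') :=
  (prodUp H H').comp
    (((B j G).comp (Matrix.toEuclideanCLM (𝕜 := ℂ) D')).prod (B' j G))

/-- The `C`-map of the FM product realization: `C^×(x ⊕ x') = Cx + DC'x'`. -/
def fmProdC {n : ℕ} (Cm : H →L[ℂ] EuclideanSpace ℂ (Fin n))
    (Cm' : H' →L[ℂ] EuclideanSpace ℂ (Fin n)) (D : Matrix (Fin n) (Fin n) ℂ) :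
    WithLp 2 (H × H') →L[ℂ] EuclideanSpace ℂ (Fin n) :=
  Cm.comp (fstW H H') + (Matrix.toEuclideanCLM (𝕜 := ℂ) D).comp (Cm'.comp (sndW H H'))


/-! ### Auxiliary lemmas for the product formula -/

section AuxLemmas

omit [InnerProductSpace ℂ E] in
lemma piLp_sum_apply {ι κ : Type*} (s : Finset ι) (f : ι → PiLp 2 (fun _ : κ => E)) (p : κ) :
    (∑ i ∈ s, f i) p = ∑ i ∈ s, f i p := by
  induction s using Finset.cons_induction with
  | empty => rfl
  | cons a s ha ih => rw [Finset.sum_cons, Finset.sum_cons, PiLp.add_apply, ih]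

@[simp] lemma projL_apply {ι : Type*} [Fintype ι] (p : ι) (x : PiLp 2 (fun _ : ι => E)) :
    projL ι E p x = x p := rfl

@[simp] lemma inclL_apply {ι : Type*} [Fintype ι] [DecidableEq ι] (p q : ι) (v : E) :
    inclL ι E p v q = if q = p then v else 0 := by
  simp only [inclL, ContinuousLinearMap.comp_apply, ContinuousLinearMap.pi_apply,
    ContinuousLinearEquiv.coe_coe, PiLp.continuousLinearEquiv_symm_apply,
    PiLp.toLp_apply]
  split <;> rfl

lemma toCLM_apply {ι : Type*} [Fintype ι] [DecidableEq ι] (M : Matrix ι ι ℂ)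
    (x : EuclideanSpace ℂ ι) (i : ι) :
    Matrix.toEuclideanCLM (𝕜 := ℂ) M x i = ∑ j, M i j * x j := by
  have h : Matrix.toEuclideanCLM (𝕜 := ℂ) M x = Matrix.toEuclideanLin M x := rfl
  rw [h, Matrix.toEuclideanLin_apply]
  rfl

/-- Componentwise application of a continuous linear map on a Hilbert direct sum of copies. -/
def mapPi (μ : Type*) [Fintype μ] [DecidableEq μ] {F : Type*} [NormedAddCommGroup F]
    [InnerProductSpace ℂ F] (T : E →L[ℂ] F) :
    PiLp 2 (fun _ : μ => E) →L[ℂ] PiLp 2 (fun _ : μ => F) :=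
  ∑ p, (inclL μ F p).comp (T.comp (projL μ E p))

@[simp] lemma mapPi_apply {μ : Type*} [Fintype μ] [DecidableEq μ] {F : Type*}
    [NormedAddCommGroup F] [InnerProductSpace ℂ F] (T : E →L[ℂ] F)
    (x : PiLp 2 (fun _ : μ => E)) (p : μ) :
    mapPi μ T x p = T (x p) := by
  simp [mapPi, ContinuousLinearMap.sum_apply, piLp_sum_apply]

lemma amp_apply {μ ν : Type*} [Fintype μ] [DecidableEq μ]
    (A : Matrix ν ν ℂ → (E →L[ℂ] E)) (Z : Matrix (μ × ν) (μ × ν) ℂ)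
    (x : PiLp 2 (fun _ : μ => E)) (p : μ) :
    amp A Z x p = ∑ q, A (blk Z p q) (x q) := by
  simp only [amp, ContinuousLinearMap.sum_apply, piLp_sum_apply,
    ContinuousLinearMap.comp_apply, inclL_apply, projL_apply]
  rw [Finset.sum_comm]
  simp

lemma restrL_apply {μ ν : Type*} [Fintype μ] [Fintype ν] [DecidableEq ν] (p : μ)
    (x : EuclideanSpace ℂ (μ × ν)) (i : ν) :
    restrL μ ν p x i = x (p, i) := by
  simp [restrL, ContinuousLinearMap.sum_apply, piLp_sum_apply,
    ContinuousLinearMap.smulRight_apply, PiLp.smul_apply, EuclideanSpace.single_apply,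
    mul_ite, mul_one, mul_zero]

lemma embedE_apply {μ ν : Type*} [Fintype μ] [DecidableEq μ] [Fintype ν] [DecidableEq ν]
    (p : μ) (v : EuclideanSpace ℂ ν) (q : μ) (i : ν) :
    embedE μ ν p v (q, i) = if q = p then v i else 0 := by
  simp only [embedE, ContinuousLinearMap.sum_apply, piLp_sum_apply, PiLp.smul_apply,
    ContinuousLinearMap.smulRight_apply, EuclideanSpace.single_apply, Prod.mk.injEq,
    smul_eq_mul, mul_ite, mul_one, mul_zero]
  by_cases h : q = p <;> simp [h, and_comm]

lemma ampB_apply {μ ν : Type*} [Fintype μ] [DecidableEq μ] [Fintype ν] [DecidableEq ν]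
    (b : Matrix ν ν ℂ → (EuclideanSpace ℂ ν →L[ℂ] E)) (Z : Matrix (μ × ν) (μ × ν) ℂ)
    (v : EuclideanSpace ℂ (μ × ν)) (p : μ) :
    ampB b Z v p = ∑ q, b (blk Z p q) (restrL μ ν q v) := by
  simp only [ampB, ContinuousLinearMap.sum_apply, piLp_sum_apply,
    ContinuousLinearMap.comp_apply, inclL_apply]
  rw [Finset.sum_comm]
  simp

lemma ampRow_apply {μ ν : Type*} [Fintype μ] [DecidableEq μ] [Fintype ν] [DecidableEq ν]
    (c : E →L[ℂ] EuclideanSpace ℂ ν) (x : PiLp 2 (fun _ : μ => E)) (p : μ) (i : ν) :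
    ampRow c x (p, i) = c (x p) i := by
  simp only [ampRow, ContinuousLinearMap.sum_apply, piLp_sum_apply,
    ContinuousLinearMap.comp_apply, embedE_apply, projL_apply]
  simp

lemma restrL_ampRow {μ ν : Type*} [Fintype μ] [DecidableEq μ] [Fintype ν] [DecidableEq ν]
    (c : E →L[ℂ] EuclideanSpace ℂ ν) (x : PiLp 2 (fun _ : μ => E)) (q : μ) :
    restrL μ ν q (ampRow c x) = c (x q) := by
  refine PiLp.ext fun i => ?_
  rw [restrL_apply, ampRow_apply]

lemma restrL_toCLM_oneKron {μ ν : Type*} [Fintype μ] [DecidableEq μ] [Fintype ν]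
    [DecidableEq ν] (Dm : Matrix ν ν ℂ) (v : EuclideanSpace ℂ (μ × ν)) (q : μ) :
    restrL μ ν q (Matrix.toEuclideanCLM (𝕜 := ℂ) (oneKron μ Dm) v) =
      Matrix.toEuclideanCLM (𝕜 := ℂ) Dm (restrL μ ν q v) := by
  refine PiLp.ext fun i => ?_
  simp only [restrL_apply, toCLM_apply, oneKron, Fintype.sum_prod_type, Matrix.of_apply,
    ite_mul, zero_mul]
  simp

end AuxLemmas

section ProdAux

variable {F : Type*} [NormedAddCommGroup F] [InnerProductSpace ℂ F]

@[simp] lemma fstW_inlW (a : E) : fstW E F (inlW E F a) = a := rfl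
@[simp] lemma fstW_inrW (b : F) : fstW E F (inrW E F b) = 0 := rfl
@[simp] lemma sndW_inlW (a : E) : sndW E F (inlW E F a) = 0 := rfl
@[simp] lemma sndW_inrW (b : F) : sndW E F (inrW E F b) = b := rfl

lemma withLp_prod_ext {z w : WithLp 2 (E × F)} (h1 : fstW E F z = fstW E F w)
    (h2 : sndW E F z = sndW E F w) : z = w := by
  apply (WithLp.prodContinuousLinearEquiv 2 ℂ E F).injective
  exact Prod.ext h1 h2

lemma inlW_fstW_add_inrW_sndW (z : WithLp 2 (E × F)) :
    inlW E F (fstW E F z) + inrW E F (sndW E F z) = z := by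
  apply withLp_prod_ext
  · simp [map_add]
  · simp [map_add]

end ProdAux

section FmProdAux

variable {H H' : Type*} [NormedAddCommGroup H] [InnerProductSpace ℂ H] [CompleteSpace H]
  [NormedAddCommGroup H'] [InnerProductSpace ℂ H'] [CompleteSpace H']

lemma fstW_fmProdA {d n : ℕ} (A : Fin d → Matrix (Fin n) (Fin n) ℂ → (H →L[ℂ] H))
    (B : Fin d → Matrix (Fin n) (Fin n) ℂ → (EuclideanSpace ℂ (Fin n) →L[ℂ] H))
    (A' : Fin d → Matrix (Fin n) (Fin n) ℂ → (H' →L[ℂ] H'))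
    (Cm' : H' →L[ℂ] EuclideanSpace ℂ (Fin n)) (j : Fin d) (G : Matrix (Fin n) (Fin n) ℂ)
    (z : WithLp 2 (H × H')) :
    fstW H H' (fmProdA A B A' Cm' j G z)
      = A j G (fstW H H' z) + B j G (Cm' (sndW H H' z)) := rfl

lemma sndW_fmProdA {d n : ℕ} (A : Fin d → Matrix (Fin n) (Fin n) ℂ → (H →L[ℂ] H))
    (B : Fin d → Matrix (Fin n) (Fin n) ℂ → (EuclideanSpace ℂ (Fin n) →L[ℂ] H))
    (A' : Fin d → Matrix (Fin n) (Fin n) ℂ → (H' →L[ℂ] H'))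
    (Cm' : H' →L[ℂ] EuclideanSpace ℂ (Fin n)) (j : Fin d) (G : Matrix (Fin n) (Fin n) ℂ)
    (z : WithLp 2 (H × H')) :
    sndW H H' (fmProdA A B A' Cm' j G z) = A' j G (sndW H H' z) := rfl

lemma fstW_fmProdB {d n : ℕ}
    (B : Fin d → Matrix (Fin n) (Fin n) ℂ → (EuclideanSpace ℂ (Fin n) →L[ℂ] H))
    (B' : Fin d → Matrix (Fin n) (Fin n) ℂ → (EuclideanSpace ℂ (Fin n) →L[ℂ] H'))
    (D' : Matrix (Fin n) (Fin n) ℂ) (j : Fin d) (G : Matrix (Fin n) (Fin n) ℂ)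
    (v : EuclideanSpace ℂ (Fin n)) :
    fstW H H' (fmProdB B B' D' j G v)
      = B j G (Matrix.toEuclideanCLM (𝕜 := ℂ) D' v) := rfl

lemma sndW_fmProdB {d n : ℕ}
    (B : Fin d → Matrix (Fin n) (Fin n) ℂ → (EuclideanSpace ℂ (Fin n) →L[ℂ] H))
    (B' : Fin d → Matrix (Fin n) (Fin n) ℂ → (EuclideanSpace ℂ (Fin n) →L[ℂ] H'))
    (D' : Matrix (Fin n) (Fin n) ℂ) (j : Fin d) (G : Matrix (Fin n) (Fin n) ℂ)
    (v : EuclideanSpace ℂ (Fin n)) :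
    sndW H H' (fmProdB B B' D' j G v) = B' j G v := rfl

lemma fmProdC_apply {n : ℕ} (Cm : H →L[ℂ] EuclideanSpace ℂ (Fin n))
    (Cm' : H' →L[ℂ] EuclideanSpace ℂ (Fin n)) (D : Matrix (Fin n) (Fin n) ℂ)
    (z : WithLp 2 (H × H')) :
    fmProdC Cm Cm' D z
      = Cm (fstW H H' z) + Matrix.toEuclideanCLM (𝕜 := ℂ) D (Cm' (sndW H H' z)) := rfl

end FmProdAux

lemma oneKron_mul {μ ν : Type*} [Fintype μ] [DecidableEq μ] [Fintype ν]
    (D D' : Matrix ν ν ℂ) :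
    oneKron μ (D * D') = oneKron μ D * oneKron μ D' := by
  ext pi qj
  obtain ⟨p, i⟩ := pi
  obtain ⟨q, j⟩ := qj
  simp only [oneKron, Matrix.of_apply, Matrix.mul_apply, Fintype.sum_prod_type, ite_mul,
    zero_mul, mul_ite, mul_zero]
  by_cases h : p = q
  · subst h
    simp [Finset.sum_ite_eq]
  · simp [Finset.sum_ite_eq, h]
/-- **FM product formula about a matrix centre.** Whenever both factor
pencils are invertible at `X`, the pencil of the FM product realization on `H ⊕ H'` is
invertible at `X` and its transfer function is the product `f(X)·g(X)`. -/
theorem fm_product_realization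
    {d n : ℕ} (Y : Fin d → Matrix (Fin n) (Fin n) ℂ)
    (A : Fin d → Matrix (Fin n) (Fin n) ℂ → (H →L[ℂ] H)) (hA : ∀ j, IsLinearMap ℂ (A j))
    (B : Fin d → Matrix (Fin n) (Fin n) ℂ → (EuclideanSpace ℂ (Fin n) →L[ℂ] H))
    (hB : ∀ j, IsLinearMap ℂ (B j))
    (Cm : H →L[ℂ] EuclideanSpace ℂ (Fin n)) (D : Matrix (Fin n) (Fin n) ℂ)
    (A' : Fin d → Matrix (Fin n) (Fin n) ℂ → (H' →L[ℂ] H')) (hA' : ∀ j, IsLinearMap ℂ (A' j))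
    (B' : Fin d → Matrix (Fin n) (Fin n) ℂ → (EuclideanSpace ℂ (Fin n) →L[ℂ] H'))
    (hB' : ∀ j, IsLinearMap ℂ (B' j))
    (Cm' : H' →L[ℂ] EuclideanSpace ℂ (Fin n)) (D' : Matrix (Fin n) (Fin n) ℂ)
    (m : ℕ) (hm : 0 < m) (X : Fin d → Matrix (Fin m × Fin n) (Fin m × Fin n) ℂ)
    (hX : IsUnit (pencil A (fun j => X j - oneKron (Fin m) (Y j))))
    (hX' : IsUnit (pencil A' (fun j => X j - oneKron (Fin m) (Y j)))) :
    IsUnit (pencil (fmProdA A B A' Cm') (fun j => X j - oneKron (Fin m) (Y j))) ∧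
    fmTransfer (fmProdA A B A' Cm') (fmProdB B B' D') (fmProdC Cm Cm' D) (D * D') Y X =
      fmTransfer A B Cm D Y X * fmTransfer A' B' Cm' D' Y X := by
  classical
  set Z : Fin d → Matrix (Fin m × Fin n) (Fin m × Fin n) ℂ :=
    fun j => X j - oneKron (Fin m) (Y j) with hZdef
  have hZj : ∀ j, X j - oneKron (Fin m) (Y j) = Z j := fun j => rfl
  have hXu : IsUnit (pencil A Z) := hX
  have hXu' : IsUnit (pencil A' Z) := hX'
  -- inverse facts
  have hP1 : ∀ y, Ring.inverse (pencil A Z) (pencil A Z y) = y := by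
    intro y
    have h := Ring.inverse_mul_cancel _ hXu
    have h2 := DFunLike.congr_fun h y
    simpa [ContinuousLinearMap.mul_apply] using h2
  have hP2 : ∀ y, pencil A Z (Ring.inverse (pencil A Z) y) = y := by
    intro y
    have h := Ring.mul_inverse_cancel _ hXu
    have h2 := DFunLike.congr_fun h y
    simpa [ContinuousLinearMap.mul_apply] using h2
  have hP1' : ∀ y, Ring.inverse (pencil A' Z) (pencil A' Z y) = y := by
    intro y
    have h := Ring.inverse_mul_cancel _ hXu'
    have h2 := DFunLike.congr_fun h y
    simpa [ContinuousLinearMap.mul_apply] using h2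
  have hP2' : ∀ y, pencil A' Z (Ring.inverse (pencil A' Z) y) = y := by
    intro y
    have h := Ring.mul_inverse_cancel _ hXu'
    have h2 := DFunLike.congr_fun h y
    simpa [ContinuousLinearMap.mul_apply] using h2
  -- structural facts about the direct-sum decomposition
  have hdec : ∀ z : PiLp 2 (fun _ : Fin m => WithLp 2 (H × H')),
      mapPi (Fin m) (inlW H H') (mapPi (Fin m) (fstW H H') z)
        + mapPi (Fin m) (inrW H H') (mapPi (Fin m) (sndW H H') z) = z := by
    intro z
    refine PiLp.ext fun p => ?_
    rw [PiLp.add_apply]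
    simp [inlW_fstW_add_inrW_sndW]
  have hΦI₁ : ∀ a, mapPi (Fin m) (fstW H H') (mapPi (Fin m) (inlW H H') a) = a := by
    intro a; refine PiLp.ext fun p => ?_; simp
  have hΦI₂ : ∀ b, mapPi (Fin m) (fstW H H') (mapPi (Fin m) (inrW H H') b) = 0 := by
    intro b; refine PiLp.ext fun p => ?_; simp [PiLp.zero_apply]
  have hΨI₁ : ∀ a, mapPi (Fin m) (sndW H H') (mapPi (Fin m) (inlW H H') a) = 0 := by
    intro a; refine PiLp.ext fun p => ?_; simp [PiLp.zero_apply]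
  have hΨI₂ : ∀ b, mapPi (Fin m) (sndW H H') (mapPi (Fin m) (inrW H H') b) = b := by
    intro b; refine PiLp.ext fun p => ?_; simp
  -- ampliation structure of the product realization
  have hampΦ : ∀ (j : Fin d) x,
      mapPi (Fin m) (fstW H H') (amp (fmProdA A B A' Cm' j) (Z j) x)
        = amp (A j) (Z j) (mapPi (Fin m) (fstW H H') x)
          + ampB (B j) (Z j) (ampRow Cm' (mapPi (Fin m) (sndW H H') x)) := by
    intro j x
    refine PiLp.ext fun p => ?_
    rw [PiLp.add_apply]
    simp only [mapPi_apply, amp_apply, map_sum, fstW_fmProdA, ampB_apply, restrL_ampRow]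
    rw [← Finset.sum_add_distrib]
  have hampΨ : ∀ (j : Fin d) x,
      mapPi (Fin m) (sndW H H') (amp (fmProdA A B A' Cm' j) (Z j) x)
        = amp (A' j) (Z j) (mapPi (Fin m) (sndW H H') x) := by
    intro j x
    refine PiLp.ext fun p => ?_
    simp only [mapPi_apply, amp_apply, map_sum, sndW_fmProdA]
  -- pencil intertwining
  have h1 : ∀ x, mapPi (Fin m) (fstW H H') (pencil (fmProdA A B A' Cm') Z x)
      = pencil A Z (mapPi (Fin m) (fstW H H') x)
        - (∑ j, ampB (B j) (Z j)) (ampRow Cm' (mapPi (Fin m) (sndW H H') x)) := by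
    intro x
    simp only [pencil, ContinuousLinearMap.sub_apply, ContinuousLinearMap.one_apply,
      ContinuousLinearMap.sum_apply, map_sub, map_sum, hampΦ]
    rw [Finset.sum_add_distrib]
    abel
  have h2 : ∀ x, mapPi (Fin m) (sndW H H') (pencil (fmProdA A B A' Cm') Z x)
      = pencil A' Z (mapPi (Fin m) (sndW H H') x) := by
    intro x
    simp only [pencil, ContinuousLinearMap.sub_apply, ContinuousLinearMap.one_apply,
      ContinuousLinearMap.sum_apply, map_sub, map_sum, hampΨ]
  -- the candidate inverse
  set Qop : PiLp 2 (fun _ : Fin m => WithLp 2 (H × H')) →L[ℂ]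
      PiLp 2 (fun _ : Fin m => WithLp 2 (H × H')) :=
    (mapPi (Fin m) (inlW H H')).comp ((Ring.inverse (pencil A Z)).comp
        (mapPi (Fin m) (fstW H H')))
      + (mapPi (Fin m) (inlW H H')).comp ((Ring.inverse (pencil A Z)).comp
          ((∑ j, ampB (B j) (Z j)).comp ((ampRow Cm').comp
            ((Ring.inverse (pencil A' Z)).comp (mapPi (Fin m) (sndW H H'))))))
      + (mapPi (Fin m) (inrW H H')).comp ((Ring.inverse (pencil A' Z)).comp
          (mapPi (Fin m) (sndW H H'))) with hQopdef
  have hQapp : ∀ z, Qop z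
      = mapPi (Fin m) (inlW H H') (Ring.inverse (pencil A Z) (mapPi (Fin m) (fstW H H') z))
        + mapPi (Fin m) (inlW H H') (Ring.inverse (pencil A Z) ((∑ j, ampB (B j) (Z j))
            (ampRow Cm' (Ring.inverse (pencil A' Z) (mapPi (Fin m) (sndW H H') z)))))
        + mapPi (Fin m) (inrW H H') (Ring.inverse (pencil A' Z)
            (mapPi (Fin m) (sndW H H') z)) := fun z => rfl
  have hQP : ∀ z, Qop (pencil (fmProdA A B A' Cm') Z z) = z := by
    intro z
    rw [hQapp, h1, h2, map_sub, map_sub, hP1, hP1']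
    rw [sub_add_cancel]
    exact hdec z
  have hPQ : ∀ z, pencil (fmProdA A B A' Cm') Z (Qop z) = z := by
    intro z
    have hΦQ : mapPi (Fin m) (fstW H H') (Qop z)
        = Ring.inverse (pencil A Z) (mapPi (Fin m) (fstW H H') z)
          + Ring.inverse (pencil A Z) ((∑ j, ampB (B j) (Z j))
              (ampRow Cm' (Ring.inverse (pencil A' Z) (mapPi (Fin m) (sndW H H') z)))) := by
      rw [hQapp]
      simp only [map_add, hΦI₁, hΦI₂, add_zero]
    have hΨQ : mapPi (Fin m) (sndW H H') (Qop z)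
        = Ring.inverse (pencil A' Z) (mapPi (Fin m) (sndW H H') z) := by
      rw [hQapp]
      simp only [map_add, hΨI₁, hΨI₂, zero_add]
    calc pencil (fmProdA A B A' Cm') Z (Qop z)
        = mapPi (Fin m) (inlW H H') (mapPi (Fin m) (fstW H H')
            (pencil (fmProdA A B A' Cm') Z (Qop z)))
          + mapPi (Fin m) (inrW H H') (mapPi (Fin m) (sndW H H')
            (pencil (fmProdA A B A' Cm') Z (Qop z))) := (hdec _).symm
      _ = z := by
          simp only [h1, h2, hΦQ, hΨQ, map_add, hP2, hP2']
          rw [add_sub_cancel_right]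
          exact hdec z
  have hunit : IsUnit (pencil (fmProdA A B A' Cm') Z) := by
    refine ⟨⟨pencil (fmProdA A B A' Cm') Z, Qop, ?_, ?_⟩, rfl⟩
    · refine ContinuousLinearMap.ext fun z => ?_
      simpa [ContinuousLinearMap.mul_apply] using hPQ z
    · refine ContinuousLinearMap.ext fun z => ?_
      simpa [ContinuousLinearMap.mul_apply] using hQP z
  refine ⟨hunit, ?_⟩
  -- the inverse of the product pencil is `Qop`
  have hQinv : Ring.inverse (pencil (fmProdA A B A' Cm') Z) = Qop := by
    have h := Ring.inverse_unit (M₀ := _)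
      (⟨pencil (fmProdA A B A' Cm') Z, Qop,
        by refine ContinuousLinearMap.ext fun z => ?_
           simpa [ContinuousLinearMap.mul_apply] using hPQ z,
        by refine ContinuousLinearMap.ext fun z => ?_
           simpa [ContinuousLinearMap.mul_apply] using hQP z⟩ :
        (PiLp 2 (fun _ : Fin m => WithLp 2 (H × H')) →L[ℂ]
          PiLp 2 (fun _ : Fin m => WithLp 2 (H × H')))ˣ)
    exact h
  -- structure of the product numerator
  have hSx : ∀ v, (∑ j, ampB (fmProdB B B' D' j) (Z j)) v
      = mapPi (Fin m) (inlW H H') ((∑ j, ampB (B j) (Z j))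
          (Matrix.toEuclideanCLM (𝕜 := ℂ) (oneKron (Fin m) D') v))
        + mapPi (Fin m) (inrW H H') ((∑ j, ampB (B' j) (Z j)) v) := by
    intro v
    refine PiLp.ext fun p => ?_
    rw [PiLp.add_apply]
    apply withLp_prod_ext
    · simp only [map_add, mapPi_apply, fstW_inlW, fstW_inrW, add_zero,
        ContinuousLinearMap.sum_apply, piLp_sum_apply, ampB_apply, map_sum,
        fstW_fmProdB, restrL_toCLM_oneKron, Finset.sum_const_zero, add_zero, zero_add]
    · simp only [map_add, mapPi_apply, sndW_inlW, sndW_inrW, zero_add,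
        ContinuousLinearMap.sum_apply, piLp_sum_apply, ampB_apply, map_sum,
        sndW_fmProdB, Finset.sum_const_zero, add_zero, zero_add]
  -- structure of the product output row
  have hRx : ∀ x, ampRow (μ := Fin m) (fmProdC Cm Cm' D) x
      = ampRow Cm (mapPi (Fin m) (fstW H H') x)
        + Matrix.toEuclideanCLM (𝕜 := ℂ) (oneKron (Fin m) D)
            (ampRow Cm' (mapPi (Fin m) (sndW H H') x)) := by
    intro x
    refine PiLp.ext fun pi => ?_
    obtain ⟨p, i⟩ := pi
    rw [PiLp.add_apply]
    simp only [ampRow_apply, fmProdC_apply, PiLp.add_apply, toCLM_apply, oneKron,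
      Fintype.sum_prod_type, Matrix.of_apply, ite_mul, zero_mul, mapPi_apply,
      ampRow_apply]
    simp [Finset.sum_ite_eq]
  have hRx2 : ∀ a b, ampRow (μ := Fin m) (fmProdC Cm Cm' D)
        (mapPi (Fin m) (inlW H H') a + mapPi (Fin m) (inrW H H') b)
      = ampRow Cm a + Matrix.toEuclideanCLM (𝕜 := ℂ) (oneKron (Fin m) D) (ampRow Cm' b) := by
    intro a b
    rw [hRx]
    simp only [map_add, hΦI₁, hΦI₂, hΨI₁, hΨI₂, add_zero, zero_add]
  have hQ2 : ∀ a b, Qop (mapPi (Fin m) (inlW H H') a + mapPi (Fin m) (inrW H H') b)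
      = mapPi (Fin m) (inlW H H') (Ring.inverse (pencil A Z) a
          + Ring.inverse (pencil A Z) ((∑ j, ampB (B j) (Z j))
              (ampRow Cm' (Ring.inverse (pencil A' Z) b))))
        + mapPi (Fin m) (inrW H H') (Ring.inverse (pencil A' Z) b) := by
    intro a b
    rw [map_add, hQapp, hQapp]
    simp only [hΦI₁, hΦI₂, hΨI₁, hΨI₂, map_zero, add_zero, zero_add, map_add]
    abel
  -- final computation
  refine ContinuousLinearMap.ext fun v => ?_
  simp only [fmTransfer, ContinuousLinearMap.mul_apply]
  rw [← hZdef]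
  simp only [hZj]
  rw [hQinv]
  simp only [ContinuousLinearMap.add_apply, ContinuousLinearMap.comp_apply]
  rw [hSx, hQ2, hRx2]
  rw [oneKron_mul, map_mul, ContinuousLinearMap.mul_apply]
  simp only [map_add]
  abel


end MC
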